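/- arXiv:1901.10893 — 2 statements merged into one kernel-verified Lean document; each statement's English description precedes it below -/
import Mathlib

section
/- Let M be an n × n real symmetric positive semidefinite matrix and let Q₁ be an n × m matrix with orthonormal columns. Then (det(Q₁ᵀ M Q₁))² ≤ det(Q₁ᵀ M² Q₁). -/
/-!
With `A = Q₁ᵀ M Q₁` and `B = Q₁ᵀ M² Q₁`, the gap `B - A²` equals `(M Q₁)ᵀ (1 - Q₁ Q₁ᵀ) (M Q₁)`,
which is positive semidefinite because `1 - Q₁ Q₁ᵀ` is an orthogonal projection. Hence
`A² ≤ B` in the Loewner order. If `A` is singular there is nothing to prove; otherwise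
`B = A (1 + P) A` with `P = A⁻¹ (B - A²) A⁻¹ ⪰ 0`, and `det (1 + P) ≥ 1` since every eigenvalue
of `1 + P` is at least `1`.
-/

open Matrix

namespace Matrix

section StarOrderedRing

variable {ι κ R : Type*} [Fintype ι] [Fintype κ] [DecidableEq ι] [DecidableEq κ]
  [Ring R] [PartialOrder R] [StarRing R] [StarOrderedRing R]

theorem posSemidef_one_sub_mul_conjTranspose {Q : Matrix ι κ R} (hQ : Qᴴ * Q = 1) :
    (1 - Q * Qᴴ).PosSemidef := by
  have hidem : (1 - Q * Qᴴ)ᴴ * (1 - Q * Qᴴ) = 1 - Q * Qᴴ := by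
    have hproj : Q * Qᴴ * (Q * Qᴴ) = Q * Qᴴ := by
      rw [Matrix.mul_assoc, ← Matrix.mul_assoc Qᴴ, hQ, Matrix.one_mul]
    simp only [conjTranspose_sub, conjTranspose_one, conjTranspose_mul,
      conjTranspose_conjTranspose, sub_mul, mul_sub, Matrix.one_mul, Matrix.mul_one, hproj]
    abel
  exact hidem ▸ posSemidef_conjTranspose_mul_self _

theorem IsHermitian.posSemidef_compression_sq_sub {M : Matrix ι ι R} (hM : M.IsHermitian)
    {Q : Matrix ι κ R} (hQ : Qᴴ * Q = 1) :
    (Qᴴ * M ^ 2 * Q - (Qᴴ * M * Q)ᴴ * (Qᴴ * M * Q)).PosSemidef := by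
  convert (posSemidef_one_sub_mul_conjTranspose hQ).conjTranspose_mul_mul_same (M * Q) using 1
  simp only [conjTranspose_mul, conjTranspose_conjTranspose, hM.eq, sq, Matrix.mul_sub,
    Matrix.sub_mul, Matrix.mul_one, Matrix.mul_assoc]

end StarOrderedRing

section Real

variable {ι : Type*} [Fintype ι] [DecidableEq ι]

theorem PosSemidef.one_le_det_one_add {P : Matrix ι ι ℝ} (hP : P.PosSemidef) :
    1 ≤ (1 + P).det := by
  rw [hP.1.spectral_theorem, ← map_one (Unitary.conjStarAlgAut ℝ _ hP.1.eigenvectorUnitary),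
    ← map_add, det_map, ← diagonal_one, diagonal_add, det_diagonal]
  exact Finset.one_le_prod fun i => by simpa using hP.eigenvalues_nonneg i

theorem sq_det_le_det_of_posSemidef_sub {S B : Matrix ι ι ℝ} (h : (B - Sᴴ * S).PosSemidef) :
    S.det ^ 2 ≤ B.det := by
  by_cases hS : S.det = 0
  · have hB : B.PosSemidef := by simpa using (posSemidef_conjTranspose_mul_self S).add h
    simpa [hS] using hB.det_nonneg
  have hSu : IsUnit S.det := isUnit_iff_ne_zero.mpr hS
  set P := S⁻¹ᴴ * (B - Sᴴ * S) * S⁻¹ with hPdef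
  have hP : P.PosSemidef := h.conjTranspose_mul_mul_same S⁻¹
  have hB : Sᴴ * (1 + P) * S = B := by
    simp only [hPdef, conjTranspose_eq_transpose_of_trivial, transpose_nonsing_inv,
      Matrix.mul_add, Matrix.add_mul, Matrix.mul_one, ← Matrix.mul_assoc,
      mul_nonsing_inv _ ((isUnit_det_transpose S) hSu)]
    simp [Matrix.mul_assoc, nonsing_inv_mul _ hSu]
  calc S.det ^ 2 ≤ S.det ^ 2 * (1 + P).det :=
        le_mul_of_one_le_right (sq_nonneg _) hP.one_le_det_one_add
    _ = (Sᴴ * (1 + P) * S).det := by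
        rw [det_mul, det_mul, conjTranspose_eq_transpose_of_trivial, det_transpose]; ring
    _ = B.det := by rw [hB]

end Real

end Matrix

/-- For a symmetric positive semidefinite M and Q₁ with orthonormal
columns, (det(Q₁ᵀ M Q₁))² ≤ det(Q₁ᵀ M² Q₁). -/
theorem det_compression_sq_le {m n : ℕ}
    (M : Matrix (Fin n) (Fin n) ℝ) (hM : M.PosSemidef)
    (Q₁ : Matrix (Fin n) (Fin m) ℝ) (hQ : Q₁ᵀ * Q₁ = 1) :
    ((Q₁ᵀ * M * Q₁).det) ^ 2 ≤ (Q₁ᵀ * M ^ 2 * Q₁).det := by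
  rw [← conjTranspose_eq_transpose_of_trivial] at hQ ⊢
  exact sq_det_le_det_of_posSemidef_sub (hM.1.posSemidef_compression_sq_sub hQ)
end

section
/- Let (c₁,…,c_k), (d₁,…,d_m) be nonnegative reals, rᵢ, nⱼ positive integers with Σᵢ rᵢ = n, and Aⱼ : ℝ^n → ℝ^{nⱼ} surjective linear maps. Define M_g as the supremum over positive definite Bᵢ ∈ S⁺(ℝ^{rᵢ}) of ½ Σᵢ cᵢ log det Bᵢ − ½ Σⱼ dⱼ log det(Aⱼ B Aⱼᵀ), where B = diag(B₁,…,B_k). If M_g < ∞, then Σᵢ cᵢ rᵢ = Σⱼ dⱼ nⱼ. -/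
open Matrix Real

/-! At `B = t • 1` the functional equals `½ (∑ᵢ cᵢ rᵢ - ∑ⱼ dⱼ nⱼ) log t` minus a constant, because
`det (t • 1) = tʳ` and `det (A (t • 1) Aᵀ) = tⁿ det (A Aᵀ)` with `det (A Aᵀ) > 0` for surjective `A`.
As `log t` ranges over all of `ℝ`, a bound on the functional forces the coefficient to vanish. -/

lemma eq_zero_of_forall_mul_le {a C : ℝ} (h : ∀ x, a * x ≤ C) : a = 0 := by
  by_contra ha
  have := h ((C + 1) / a)
  rw [mul_div_cancel₀ _ ha] at this
  linarith

namespace Matrix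

variable {m n R : Type*} [Fintype m] [Fintype n] [DecidableEq m]

lemma vecMul_injective_of_mulVec_surjective [Semiring R]
    {A : Matrix m n R} (hA : Function.Surjective A.mulVec) : Function.Injective A.vecMul := by
  obtain ⟨B, hB⟩ := mulVec_surjective_iff_exists_right_inverse.mp hA
  intro v w hvw
  simpa [vecMul_vecMul, hB] using congrArg (· ᵥ* B) hvw

lemma posDef_mul_transpose_self_of_mulVec_surjective {A : Matrix m n ℝ}
    (hA : Function.Surjective A.mulVec) : (A * Aᵀ).PosDef :=
  PosDef.mul_conjTranspose_self A (vecMul_injective_of_mulVec_surjective hA)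

lemma blockDiagonal'_smul_one {ι : Type*} [DecidableEq ι] {d : ι → Type*}
    [∀ i, DecidableEq (d i)] [Semiring R] (t : R) :
    blockDiagonal' (fun i => t • (1 : Matrix (d i) (d i) R)) = t • 1 := by
  rw [← blockDiagonal'_one, ← blockDiagonal'_smul]
  rfl

variable [DecidableEq n]

lemma log_det_smul_one (t : ℝ) :
    log (t • (1 : Matrix n n ℝ)).det = Fintype.card n * log t := by
  rw [det_smul, det_one, mul_one, log_pow]

lemma log_det_mul_smul_one_mul {t : ℝ} {A : Matrix m n ℝ} {B : Matrix n m ℝ}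
    (hAB : (A * B).det ≠ 0) (ht : 0 < t) :
    log (A * (t • (1 : Matrix n n ℝ)) * B).det = Fintype.card m * log t + log (A * B).det := by
  rw [Matrix.mul_smul, Matrix.mul_one, Matrix.smul_mul, det_smul,
    log_mul (pow_ne_zero _ ht.ne') hAB, log_pow]

end Matrix

theorem scaling_condition_of_Mg_finite_general {k m : ℕ}
    (c : Fin k → ℝ) (d : Fin m → ℝ)
    (r : Fin k → ℕ) (nn : Fin m → ℕ)
    (A : ∀ j : Fin m, Matrix (Fin (nn j)) ((i : Fin k) × Fin (r i)) ℝ)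
    (hA : ∀ j, Function.Surjective (A j).mulVec)
    (hbdd : ∃ C : ℝ, ∀ B : (i : Fin k) → Matrix (Fin (r i)) (Fin (r i)) ℝ,
      (∀ i, (B i).PosDef) →
        (1 / 2) * ∑ i, c i * Real.log (B i).det -
          (1 / 2) * ∑ j, d j * Real.log (A j * Matrix.blockDiagonal' B * (A j)ᵀ).det ≤ C) :
    ∑ i, c i * (r i : ℝ) = ∑ j, d j * (nn j : ℝ) := by
  obtain ⟨C, hC⟩ := hbdd
  have hdet : ∀ j, (A j * (A j)ᵀ).det ≠ 0 := fun j =>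
    (posDef_mul_transpose_self_of_mulVec_surjective (hA j)).det_pos.ne'
  refine sub_eq_zero.mp <| eq_zero_of_forall_mul_le
    (C := 2 * C + ∑ j, d j * log (A j * (A j)ᵀ).det) fun x => ?_
  have hx := hC (fun _ => exp x • 1) fun _ => PosDef.one.smul (exp_pos x)
  simp only [blockDiagonal'_smul_one, log_det_smul_one,
    log_det_mul_smul_one_mul (hdet _) (exp_pos x), log_exp, Fintype.card_fin,
    mul_add, Finset.sum_add_distrib] at hx
  simp only [sub_mul, Finset.sum_mul, mul_assoc]
  linarith

/-- If the Gaussian functional defining M_g is bounded above over all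
block-diagonal positive definite matrices B = diag(B₁,…,B_k) (i.e. M_g < ∞), then
necessarily Σᵢ cᵢ rᵢ = Σⱼ dⱼ nⱼ. -/
theorem scaling_condition_of_Mg_finite {k m : ℕ}
    (c : Fin k → ℝ) (d : Fin m → ℝ) (hc : ∀ i, 0 ≤ c i) (hd : ∀ j, 0 ≤ d j)
    (r : Fin k → ℕ) (hr : ∀ i, 0 < r i) (nn : Fin m → ℕ) (hn : ∀ j, 0 < nn j)
    (A : ∀ j : Fin m, Matrix (Fin (nn j)) ((i : Fin k) × Fin (r i)) ℝ)
    (hA : ∀ j, Function.Surjective (A j).mulVec)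
    (hbdd : ∃ C : ℝ, ∀ B : (i : Fin k) → Matrix (Fin (r i)) (Fin (r i)) ℝ,
      (∀ i, (B i).PosDef) →
        (1 / 2) * ∑ i, c i * Real.log (B i).det -
          (1 / 2) * ∑ j, d j * Real.log (A j * Matrix.blockDiagonal' B * (A j)ᵀ).det ≤ C) :
    ∑ i, c i * (r i : ℝ) = ∑ j, d j * (nn j : ℝ) :=
  scaling_condition_of_Mg_finite_general c d r nn A hA hbdd
end
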